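/- There are exactly 8·binomial(n,3) monotone Boolean functions f on n variables with m(f) = 4, i.e. b_4(n) = 8·C(n,3). -/
import Mathlib


open Finset

/-- A monotone Boolean function on subsets of `{0,…,n-1}`. -/
def MonoBF {n : ℕ} (f : Finset (Fin n) → Bool) : Prop :=
  ∀ ⦃S T : Finset (Fin n)⦄, S ⊆ T → f S ≤ f T

/-- `S` is a minimal upper set of `f`: `f S = 1` and every proper subset has value `0`. -/
def IsMinUpper {n : ℕ} (f : Finset (Fin n) → Bool) (S : Finset (Fin n)) : Prop :=
  f S = true ∧ ∀ T : Finset (Fin n), T ⊂ S → f T = false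

/-- `S` is a maximal lower set of `f`: `f S = 0` and every proper superset has value `1`. -/
def IsMaxLower {n : ℕ} (f : Finset (Fin n) → Bool) (S : Finset (Fin n)) : Prop :=
  f S = false ∧ ∀ T : Finset (Fin n), S ⊂ T → f T = true

instance {n : ℕ} (f : Finset (Fin n) → Bool) : DecidablePred (IsMinUpper f) := by
  intro S; unfold IsMinUpper; infer_instance

instance {n : ℕ} (f : Finset (Fin n) → Bool) : DecidablePred (IsMaxLower f) := by
  intro S; unfold IsMaxLower; infer_instance

/-- The family `𝒰(f)` of minimal upper sets. -/
def upperSets {n : ℕ} (f : Finset (Fin n) → Bool) : Finset (Finset (Fin n)) :=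
  univ.filter (IsMinUpper f)

/-- The family `ℒ(f)` of maximal lower sets. -/
def lowerSets {n : ℕ} (f : Finset (Fin n) → Bool) : Finset (Finset (Fin n)) :=
  univ.filter (IsMaxLower f)

/-- `m(f) = |𝒰(f) ∪ ℒ(f)|`. -/
def mUL {n : ℕ} (f : Finset (Fin n) → Bool) : ℕ :=
  (upperSets f ∪ lowerSets f).card

instance {n : ℕ} : DecidablePred (fun f : Finset (Fin n) → Bool => MonoBF f) := by
  intro f; unfold MonoBF; infer_instance

/-- `b_j(n)`: the number of monotone Boolean functions on `n` variables with `m(f) = j`. -/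
def bCount (n j : ℕ) : ℕ :=
  (univ.filter (fun f : Finset (Fin n) → Bool => MonoBF f ∧ mUL f = j)).card

/-- A deterministic reconstruction algorithm as a binary decision tree: internal nodes
query `f S`, the left branch corresponds to answer `0`, leaves output a function. -/
inductive DTree (n : ℕ) where
  | leaf : (Finset (Fin n) → Bool) → DTree n
  | node : Finset (Fin n) → DTree n → DTree n → DTree n

/-- The function output by the tree on input `f`. -/
def DTree.run {n : ℕ} : DTree n → (Finset (Fin n) → Bool) → (Finset (Fin n) → Bool)
  | .leaf g, _ => g
  | .node S t0 t1, f => if f S then t1.run f else t0.run f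

/-- `A(f)`: the number of queries asked on input `f`. -/
def DTree.cost {n : ℕ} : DTree n → (Finset (Fin n) → Bool) → ℕ
  | .leaf _, _ => 0
  | .node S t0 t1, f => (if f S then t1.cost f else t0.cost f) + 1

/-- The tree correctly reconstructs every monotone Boolean function. -/
def Reconstructs {n : ℕ} (t : DTree n) : Prop :=
  ∀ f : Finset (Fin n) → Bool, MonoBF f → t.run f = f

/-- The tree is `c`-competitive: `A(f) ≤ c · m(f)` for every monotone `f`. -/
def Competitive {n : ℕ} (t : DTree n) (c : ℝ) : Prop :=
  ∀ f : Finset (Fin n) → Bool, MonoBF f → (t.cost f : ℝ) ≤ c * mUL f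

/-- `c*_n`, the optimal competitivity on `n` variables. -/
noncomputable def cStar (n : ℕ) : ℝ :=
  sInf {c : ℝ | ∃ t : DTree n, Reconstructs t ∧ Competitive t c}

section Aux
variable {n : ℕ}

/-- The monotone function generated by a family of sets. -/
def famF (A : Finset (Finset (Fin n))) : Finset (Fin n) → Bool :=
  fun X => decide (∃ a ∈ A, a ⊆ X)

lemma famF_true {A : Finset (Finset (Fin n))} {X : Finset (Fin n)} :
    famF A X = true ↔ ∃ a ∈ A, a ⊆ X := by simp [famF]

lemma famF_false {A : Finset (Finset (Fin n))} {X : Finset (Fin n)} :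
    famF A X = false ↔ ∀ a ∈ A, ¬ a ⊆ X := by simp [famF]

lemma mono_famF (A : Finset (Finset (Fin n))) : MonoBF (famF A) := by
  intro S T hST
  cases hS : famF A S with
  | false => simp
  | true =>
    obtain ⟨a, ha, haS⟩ := famF_true.1 hS
    have : famF A T = true := famF_true.2 ⟨a, ha, haS.trans hST⟩
    simp [this]

lemma mem_upperSets {f : Finset (Fin n) → Bool} {S : Finset (Fin n)} :
    S ∈ upperSets f ↔ IsMinUpper f S := by simp [upperSets]

lemma mem_lowerSets {f : Finset (Fin n) → Bool} {S : Finset (Fin n)} :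
    S ∈ lowerSets f ↔ IsMaxLower f S := by simp [lowerSets]

lemma exists_minUpper {f : Finset (Fin n) → Bool} :
    ∀ X : Finset (Fin n), f X = true → ∃ A ∈ upperSets f, A ⊆ X := by
  intro X
  induction X using Finset.strongInduction with
  | _ X ih =>
    intro hX
    by_cases h : ∃ T, T ⊂ X ∧ f T = true
    · obtain ⟨T, hT, hfT⟩ := h
      obtain ⟨A, hA, hAT⟩ := ih T hT hfT
      exact ⟨A, hA, hAT.trans hT.subset⟩
    · push_neg at h
      refine ⟨X, mem_upperSets.2 ⟨hX, fun T hT => ?_⟩, Finset.Subset.refl X⟩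
      cases hfT : f T with
      | false => rfl
      | true => exact absurd hfT (h T hT)

lemma exists_maxLower {f : Finset (Fin n) → Bool} :
    ∀ X : Finset (Fin n), f X = false → ∃ M ∈ lowerSets f, X ⊆ M := by
  suffices h : ∀ k : ℕ, ∀ X : Finset (Fin n), (Finset.univ \ X).card = k →
      f X = false → ∃ M ∈ lowerSets f, X ⊆ M by
    intro X hX; exact h _ X rfl hX
  intro k
  induction k using Nat.strong_induction_on with
  | _ k ih =>
    intro X hcard hX
    by_cases h : ∃ T, X ⊂ T ∧ f T = false
    · obtain ⟨T, hT, hfT⟩ := h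
      have hlt : (Finset.univ \ T).card < k := by
        rw [← hcard]
        apply Finset.card_lt_card
        constructor
        · exact Finset.sdiff_subset_sdiff (Finset.Subset.refl _) hT.subset
        · intro hsub
          obtain ⟨x, hxT, hxX⟩ := Finset.exists_of_ssubset hT
          have : x ∈ Finset.univ \ X := by simp [hxX]
          have := hsub this
          simp [hxT] at this
      obtain ⟨M, hM, hTM⟩ := ih _ hlt T rfl hfT
      exact ⟨M, hM, hT.subset.trans hTM⟩
    · push_neg at h
      refine ⟨X, mem_lowerSets.2 ⟨hX, fun T hT => ?_⟩, Finset.Subset.refl X⟩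
      cases hfT : f T with
      | true => rfl
      | false => exact absurd hfT (h T hT)

lemma eq_famF {f : Finset (Fin n) → Bool} (hf : MonoBF f) : f = famF (upperSets f) := by
  funext X
  cases hX : f X with
  | true =>
    obtain ⟨A, hA, hAX⟩ := exists_minUpper X hX
    exact (famF_true.2 ⟨A, hA, hAX⟩).symm
  | false =>
    symm
    rw [famF_false]
    intro A hA hAX
    have h1 : f A = true := (mem_upperSets.1 hA).1
    have := hf hAX
    rw [h1, hX] at this
    exact absurd this (by simp)

/-- antichain property -/
def IsAC (A : Finset (Finset (Fin n))) : Prop :=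
  ∀ a ∈ A, ∀ b ∈ A, a ⊆ b → a = b

lemma antichain_upperSets (f : Finset (Fin n) → Bool) : IsAC (upperSets f) := by
  intro a ha b hb hab
  by_contra hne
  have := (mem_upperSets.1 hb).2 a (ssubset_of_subset_of_ne hab hne)
  rw [(mem_upperSets.1 ha).1] at this
  exact absurd this (by simp)

lemma upperSets_famF {A : Finset (Finset (Fin n))} (hA : IsAC A) :
    upperSets (famF A) = A := by
  ext X
  rw [mem_upperSets]
  constructor
  · rintro ⟨hX, hmin⟩
    obtain ⟨a, ha, haX⟩ := famF_true.1 hX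
    rcases eq_or_ne a X with rfl | hne
    · exact ha
    · have := hmin a (ssubset_of_subset_of_ne haX hne)
      rw [famF_false] at this
      exact absurd (Finset.Subset.refl a) (this a ha)
  · intro hX
    refine ⟨famF_true.2 ⟨X, hX, Finset.Subset.refl X⟩, fun T hT => ?_⟩
    rw [famF_false]
    intro a ha haT
    have := hA a ha X hX (haT.trans hT.subset)
    subst this
    exact absurd haT (by simpa using hT.not_subset)

lemma famF_inj {A B : Finset (Finset (Fin n))} (hA : IsAC A) (hB : IsAC B)
    (h : famF A = famF B) : A = B := by
  rw [← upperSets_famF hA, ← upperSets_famF hB, h]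

end Aux
section Aux2
variable {n : ℕ}

lemma upper_lower_disjoint (f : Finset (Fin n) → Bool) :
    Disjoint (upperSets f) (lowerSets f) := by
  rw [Finset.disjoint_left]
  intro S hS hS'
  have h1 := (mem_upperSets.1 hS).1
  have h2 := (mem_lowerSets.1 hS').1
  rw [h1] at h2; exact absurd h2 (by simp)

lemma mUL_eq_add (f : Finset (Fin n) → Bool) :
    mUL f = (upperSets f).card + (lowerSets f).card := by
  rw [mUL, Finset.card_union_of_disjoint (upper_lower_disjoint f)]

/-- If `A` is a minimal upper set then `|A| ≤ |L(f)|`. -/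
lemma card_le_lower {f : Finset (Fin n) → Bool} (hf : MonoBF f) {A : Finset (Fin n)}
    (hA : A ∈ upperSets f) : A.card ≤ (lowerSets f).card := by
  obtain ⟨hAt, hAmin⟩ := mem_upperSets.1 hA
  have key : ∀ x, x ∈ A → ∃ M, M ∈ lowerSets f ∧ A.erase x ⊆ M := by
    intro x hx
    have hss : A.erase x ⊂ A := Finset.erase_ssubset hx
    obtain ⟨M, hM, hMs⟩ := exists_maxLower (A.erase x) (hAmin _ hss)
    exact ⟨M, hM, hMs⟩
  choose! g hg1 hg2 using key
  apply Finset.card_le_card_of_injOn g (fun x hx => hg1 x hx)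
  intro x hx y hy hxy
  by_contra hne
  -- x ∉ g x since A ⊄ g x
  have hxgx : x ∉ g x := by
    intro hxg
    have hsub : A ⊆ g x := by
      intro z hz
      rcases eq_or_ne z x with rfl | hz'
      · exact hxg
      · exact hg2 x hx (Finset.mem_erase.2 ⟨hz', hz⟩)
    have := hf hsub
    rw [hAt, (mem_lowerSets.1 (hg1 x hx)).1] at this
    exact absurd this (by simp)
  have : x ∈ g y := hg2 y hy (Finset.mem_erase.2 ⟨hne, hx⟩)
  rw [← hxy] at this
  exact hxgx this

/-- If `M` is a maximal lower set then `|Mᶜ| ≤ |U(f)|`. -/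
lemma card_compl_le_upper {f : Finset (Fin n) → Bool} (hf : MonoBF f) {M : Finset (Fin n)}
    (hM : M ∈ lowerSets f) : (Finset.univ \ M).card ≤ (upperSets f).card := by
  obtain ⟨hMf, hMmax⟩ := mem_lowerSets.1 hM
  have key : ∀ x, x ∈ Finset.univ \ M → ∃ A, A ∈ upperSets f ∧ A ⊆ insert x M ∧ x ∈ A := by
    intro x hx
    rw [Finset.mem_sdiff] at hx
    have hss : M ⊂ insert x M := Finset.ssubset_insert hx.2
    obtain ⟨A, hA, hAs⟩ := exists_minUpper (insert x M) (hMmax _ hss)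
    refine ⟨A, hA, hAs, ?_⟩
    by_contra hxA
    have hAM : A ⊆ M := by
      intro z hz
      rcases Finset.mem_insert.1 (hAs hz) with rfl | h
      · exact absurd hz hxA
      · exact h
    have := hf hAM
    rw [(mem_upperSets.1 hA).1, hMf] at this
    exact absurd this (by simp)
  choose! g hg1 hg2 hg3 using key
  apply Finset.card_le_card_of_injOn g (fun x hx => hg1 x hx)
  intro x hx y hy hxy
  by_contra hne
  have h1 : x ∈ g y := by rw [← hxy]; exact hg3 x hx
  have := hg2 y hy h1
  rcases Finset.mem_insert.1 this with rfl | h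
  · exact hne rfl
  · have : x ∈ Finset.univ \ M := hx
    rw [Finset.mem_sdiff] at this; exact this.2 h

lemma empty_mem_upperSets {f : Finset (Fin n) → Bool} (h : ∅ ∈ upperSets f) :
    upperSets f = {∅} := by
  ext A
  simp only [Finset.mem_singleton]
  constructor
  · intro hA
    by_contra hne
    have hss : (∅ : Finset (Fin n)) ⊂ A :=
      ssubset_of_subset_of_ne (Finset.empty_subset A) (Ne.symm hne)
    have := (mem_upperSets.1 hA).2 ∅ hss
    rw [(mem_upperSets.1 h).1] at this
    exact absurd this (by simp)
  · rintro rfl; exact h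

lemma upperSets_nonempty {f : Finset (Fin n) → Bool} (hf : MonoBF f)
    (h : mUL f = 4) : (upperSets f).Nonempty := by
  rw [Finset.nonempty_iff_ne_empty]
  intro hU
  have hfl : ∀ X, f X = false := by
    intro X
    cases hX : f X with
    | false => rfl
    | true =>
      obtain ⟨A, hA, _⟩ := exists_minUpper X hX
      rw [hU] at hA; exact absurd hA (by simp)
  have hL : lowerSets f = {Finset.univ} := by
    ext M
    simp only [Finset.mem_singleton]
    constructor
    · intro hM
      by_contra hne
      have hss : M ⊂ Finset.univ :=
        ssubset_of_subset_of_ne (Finset.subset_univ M) hne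
      have := (mem_lowerSets.1 hM).2 _ hss
      rw [hfl Finset.univ] at this
      exact absurd this (by simp)
    · rintro rfl
      exact mem_lowerSets.2 ⟨hfl _, fun T hT => absurd hT.subset (by simpa using (hT.ne).symm)⟩
  rw [mUL_eq_add, hU, hL] at h
  simp at h

lemma lowerSets_nonempty {f : Finset (Fin n) → Bool} (hf : MonoBF f)
    (h : mUL f = 4) : (lowerSets f).Nonempty := by
  rw [Finset.nonempty_iff_ne_empty]
  intro hL
  have hft : ∀ X, f X = true := by
    intro X
    cases hX : f X with
    | true => rfl
    | false =>
      obtain ⟨M, hM, _⟩ := exists_maxLower X hX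
      rw [hL] at hM; exact absurd hM (by simp)
  have hU : upperSets f = {∅} := by
    apply empty_mem_upperSets
    refine mem_upperSets.2 ⟨hft _, fun T hT => absurd hT (by simp)⟩
  rw [mUL_eq_add, hU, hL] at h
  simp at h

end Aux2
section Aux3
variable {n : ℕ}

lemma univ_erase_inj {x y : Fin n} (h : Finset.univ.erase x = Finset.univ.erase y) : x = y := by
  by_contra hne
  have : x ∈ Finset.univ.erase y := Finset.mem_erase.2 ⟨hne, Finset.mem_univ x⟩
  rw [← h] at this
  exact absurd this (by simp)

lemma eq_univ_of_ssubset_erase {a : Fin n} {T : Finset (Fin n)}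
    (h : Finset.univ.erase a ⊂ T) : T = Finset.univ := by
  have ha : a ∈ T := by
    by_contra ha
    have : T ⊆ Finset.univ.erase a := fun y hy =>
      Finset.mem_erase.2 ⟨fun he => ha (he ▸ hy), Finset.mem_univ y⟩
    exact absurd this h.not_subset
  apply Finset.eq_univ_of_forall
  intro y
  rcases eq_or_ne y a with rfl | hy
  · exact ha
  · exact h.subset (Finset.mem_erase.2 ⟨hy, Finset.mem_univ y⟩)

lemma lowerSets_single (s : Finset (Fin n)) :
    lowerSets (famF {s}) = s.image (fun x => Finset.univ.erase x) := by
  ext X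
  rw [mem_lowerSets, Finset.mem_image]
  constructor
  · rintro ⟨hX, hmax⟩
    rw [famF_false] at hX
    obtain ⟨x, hxs, hxX⟩ := Finset.not_subset.1 (hX s (Finset.mem_singleton_self s))
    refine ⟨x, hxs, ?_⟩
    apply Finset.Subset.antisymm
    · intro y hy
      rw [Finset.mem_erase] at hy
      by_contra hyX
      have := hmax (insert y X) (Finset.ssubset_insert hyX)
      rw [famF_true] at this
      obtain ⟨a, ha, has⟩ := this
      rw [Finset.mem_singleton] at ha; subst ha
      rcases Finset.mem_insert.1 (has hxs) with h | h
      · exact hy.1 h.symm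
      · exact hxX h
    · intro y hy
      exact Finset.mem_erase.2 ⟨fun he => hxX (he ▸ hy), Finset.mem_univ y⟩
  · rintro ⟨x, hxs, rfl⟩
    refine ⟨?_, fun T hT => ?_⟩
    · rw [famF_false]
      intro a ha has
      rw [Finset.mem_singleton] at ha; subst ha
      have := has hxs
      simp at this
    · rw [eq_univ_of_ssubset_erase hT, famF_true]
      exact ⟨s, Finset.mem_singleton_self s, Finset.subset_univ s⟩

lemma lowerSets_singletons (s : Finset (Fin n)) :
    lowerSets (famF (s.image (fun x => ({x} : Finset (Fin n))))) = {Finset.univ \ s} := by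
  have hft : ∀ X, famF (s.image (fun x => ({x} : Finset (Fin n)))) X = true ↔
      ∃ x ∈ s, x ∈ X := by
    intro X
    rw [famF_true]
    constructor
    · rintro ⟨a, ha, haX⟩
      rw [Finset.mem_image] at ha
      obtain ⟨x, hx, rfl⟩ := ha
      exact ⟨x, hx, haX (Finset.mem_singleton_self x)⟩
    · rintro ⟨x, hx, hxX⟩
      exact ⟨{x}, Finset.mem_image_of_mem _ hx, Finset.singleton_subset_iff.2 hxX⟩
  ext X
  rw [mem_lowerSets, Finset.mem_singleton]
  constructor
  · rintro ⟨hX, hmax⟩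
    apply Finset.Subset.antisymm
    · intro y hy
      rw [Finset.mem_sdiff]
      refine ⟨Finset.mem_univ y, fun hys => ?_⟩
      have : famF _ X = true := (hft X).2 ⟨y, hys, hy⟩
      rw [hX] at this; exact absurd this (by simp)
    · intro y hy
      rw [Finset.mem_sdiff] at hy
      by_contra hyX
      have := hmax (insert y X) (Finset.ssubset_insert hyX)
      obtain ⟨x, hxs, hxX⟩ := (hft _).1 this
      rcases Finset.mem_insert.1 hxX with rfl | h
      · exact hy.2 hxs
      · have : famF _ X = true := (hft X).2 ⟨x, hxs, h⟩
        rw [hX] at this; exact absurd this (by simp)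
  · rintro rfl
    refine ⟨?_, fun T hT => ?_⟩
    · cases hc : famF (s.image (fun x => ({x} : Finset (Fin n)))) (Finset.univ \ s) with
      | false => rfl
      | true =>
        obtain ⟨x, hxs, hxX⟩ := (hft _).1 hc
        rw [Finset.mem_sdiff] at hxX
        exact absurd hxs hxX.2
    · obtain ⟨y, hyT, hyX⟩ := Finset.exists_of_ssubset hT
      rw [Finset.mem_sdiff] at hyX
      push_neg at hyX
      exact (hft T).2 ⟨y, hyX (Finset.mem_univ y), hyT⟩

end Aux3
section Aux4
variable {n : ℕ}

lemma famF_type2_true (s : Finset (Fin n)) (a : Fin n) (X : Finset (Fin n)) :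
    famF (insert {a} {s.erase a}) X = true ↔ a ∈ X ∨ s.erase a ⊆ X := by
  rw [famF_true]
  constructor
  · rintro ⟨b, hb, hbX⟩
    rcases Finset.mem_insert.1 hb with rfl | hb
    · exact Or.inl (hbX (Finset.mem_singleton_self a))
    · rw [Finset.mem_singleton] at hb; subst hb; exact Or.inr hbX
  · rintro (h | h)
    · exact ⟨{a}, Finset.mem_insert_self _ _, Finset.singleton_subset_iff.2 h⟩
    · exact ⟨s.erase a, Finset.mem_insert_of_mem (Finset.mem_singleton_self _), h⟩

lemma lowerSets_type2 (s : Finset (Fin n)) (a : Fin n) :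
    lowerSets (famF (insert {a} {s.erase a})) =
      (s.erase a).image (fun x => (Finset.univ.erase a).erase x) := by
  ext X
  rw [mem_lowerSets, Finset.mem_image]
  constructor
  · rintro ⟨hX, hmax⟩
    have hX' : ¬ (a ∈ X ∨ s.erase a ⊆ X) := by
      intro h
      have := (famF_type2_true s a X).2 h
      rw [hX] at this; exact absurd this (by simp)
    push_neg at hX'
    obtain ⟨haX, hsX⟩ := hX'
    obtain ⟨x, hxs, hxX⟩ := Finset.not_subset.1 hsX
    have hxa : x ≠ a := (Finset.mem_erase.1 hxs).1
    refine ⟨x, hxs, ?_⟩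
    apply Finset.Subset.antisymm
    · intro y hy
      rw [Finset.mem_erase, Finset.mem_erase] at hy
      by_contra hyX
      have := hmax (insert y X) (Finset.ssubset_insert hyX)
      rcases (famF_type2_true s a _).1 this with h | h
      · rcases Finset.mem_insert.1 h with h' | h'
        · exact hy.2.1 h'.symm
        · exact haX h'
      · rcases Finset.mem_insert.1 (h hxs) with h' | h'
        · exact hy.1 h'.symm
        · exact hxX h'
    · intro y hy
      exact Finset.mem_erase.2 ⟨fun he => hxX (he ▸ hy),
        Finset.mem_erase.2 ⟨fun he => haX (he ▸ hy), Finset.mem_univ y⟩⟩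
  · rintro ⟨x, hxs, rfl⟩
    have hxa : x ≠ a := (Finset.mem_erase.1 hxs).1
    refine ⟨?_, fun T hT => ?_⟩
    · cases hc : famF (insert {a} {s.erase a}) ((Finset.univ.erase a).erase x) with
      | false => rfl
      | true =>
        rcases (famF_type2_true s a _).1 hc with h | h
        · simp at h
        · have := h hxs; simp at this
    · rw [famF_type2_true]
      by_cases haT : a ∈ T
      · exact Or.inl haT
      · right
        obtain ⟨y, hyT, hyX⟩ := Finset.exists_of_ssubset hT
        have hyx : y = x := by
          by_contra hne
          rcases eq_or_ne y a with rfl | hne2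
          · exact haT hyT
          · exact hyX (Finset.mem_erase.2 ⟨hne, Finset.mem_erase.2 ⟨hne2, Finset.mem_univ y⟩⟩)
        subst hyx
        intro z hz
        have hza : z ≠ a := (Finset.mem_erase.1 hz).1
        rcases eq_or_ne z y with rfl | hzy
        · exact hyT
        · exact hT.subset (Finset.mem_erase.2 ⟨hzy, Finset.mem_erase.2 ⟨hza, Finset.mem_univ z⟩⟩)

lemma famF_type3_true (s : Finset (Fin n)) (a : Fin n) (X : Finset (Fin n)) :
    famF ((s.erase a).image (fun x => insert a ({x} : Finset (Fin n)))) X = true ↔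
      ∃ x ∈ s.erase a, a ∈ X ∧ x ∈ X := by
  rw [famF_true]
  constructor
  · rintro ⟨b, hb, hbX⟩
    rw [Finset.mem_image] at hb
    obtain ⟨x, hx, rfl⟩ := hb
    exact ⟨x, hx, hbX (Finset.mem_insert_self _ _),
      hbX (Finset.mem_insert_of_mem (Finset.mem_singleton_self x))⟩
  · rintro ⟨x, hx, haX, hxX⟩
    refine ⟨insert a {x}, Finset.mem_image_of_mem _ hx, ?_⟩
    intro z hz
    rcases Finset.mem_insert.1 hz with rfl | hz
    · exact haX
    · rw [Finset.mem_singleton] at hz; subst hz; exact hxX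

lemma lowerSets_type3 (s : Finset (Fin n)) (a : Fin n) (hne : (s.erase a).Nonempty) :
    lowerSets (famF ((s.erase a).image (fun x => insert a ({x} : Finset (Fin n))))) =
      insert (Finset.univ.erase a) {Finset.univ \ s.erase a} := by
  ext X
  rw [mem_lowerSets, Finset.mem_insert, Finset.mem_singleton]
  constructor
  · rintro ⟨hX, hmax⟩
    have hX' : ¬ ∃ x ∈ s.erase a, a ∈ X ∧ x ∈ X := by
      intro h
      have := (famF_type3_true s a X).2 h
      rw [hX] at this; exact absurd this (by simp)
    push_neg at hX'
    by_cases haX : a ∈ X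
    · right
      apply Finset.Subset.antisymm
      · intro y hy
        rw [Finset.mem_sdiff]
        exact ⟨Finset.mem_univ y, fun hys => hX' y hys haX hy⟩
      · intro y hy
        rw [Finset.mem_sdiff] at hy
        by_contra hyX
        have := hmax (insert y X) (Finset.ssubset_insert hyX)
        obtain ⟨x, hxs, hax, hxT⟩ := (famF_type3_true s a _).1 this
        rcases Finset.mem_insert.1 hxT with rfl | h
        · exact hy.2 hxs
        · rcases Finset.mem_insert.1 hax with h' | h'
          · exact hyX (h' ▸ haX)
          · exact hX' x hxs h' h
    · left
      apply Finset.Subset.antisymm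
      · intro y hy
        exact Finset.mem_erase.2 ⟨fun he => haX (he ▸ hy), Finset.mem_univ y⟩
      · intro y hy
        rw [Finset.mem_erase] at hy
        by_contra hyX
        have := hmax (insert y X) (Finset.ssubset_insert hyX)
        obtain ⟨x, hxs, hax, hxT⟩ := (famF_type3_true s a _).1 this
        rcases Finset.mem_insert.1 hax with rfl | h
        · exact hy.1 rfl
        · exact haX h
  · rintro (rfl | rfl)
    · refine ⟨?_, fun T hT => ?_⟩
      · cases hc : famF _ (Finset.univ.erase a) with
        | false => rfl
        | true =>
          obtain ⟨x, hxs, hax, hxT⟩ := (famF_type3_true s a _).1 hc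
          simp at hax
      · obtain ⟨x, hxs⟩ := hne
        rw [eq_univ_of_ssubset_erase hT, famF_type3_true]
        exact ⟨x, hxs, Finset.mem_univ a, Finset.mem_univ x⟩
    · refine ⟨?_, fun T hT => ?_⟩
      · cases hc : famF _ (Finset.univ \ s.erase a) with
        | false => rfl
        | true =>
          obtain ⟨x, hxs, hax, hxT⟩ := (famF_type3_true s a _).1 hc
          rw [Finset.mem_sdiff] at hxT
          exact absurd hxs hxT.2
      · obtain ⟨y, hyT, hyX⟩ := Finset.exists_of_ssubset hT
        rw [Finset.mem_sdiff] at hyX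
        push_neg at hyX
        have hys : y ∈ s.erase a := hyX (Finset.mem_univ y)
        rw [famF_type3_true]
        refine ⟨y, hys, ?_, hyT⟩
        apply hT.subset
        rw [Finset.mem_sdiff]
        exact ⟨Finset.mem_univ a, fun h => (Finset.mem_erase.1 h).1 rfl⟩
  end Aux4
section Aux5
variable {n : ℕ}

/-- The antichain associated to a parameter. -/
def ach (s : Finset (Fin n)) (o : Option (Fin n)) (b : Bool) : Finset (Finset (Fin n)) :=
  match o, b with
  | none, false => {s}
  | none, true => s.image (fun x => {x})
  | some a, false => insert {a} {s.erase a}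
  | some a, true => (s.erase a).image (fun x => insert a ({x} : Finset (Fin n)))

lemma isAC_ach (s : Finset (Fin n)) (o : Option (Fin n)) (b : Bool)
    (ho : ∀ a, o = some a → a ∈ s ∧ 2 ≤ s.card) : IsAC (ach s o b) := by
  match o, b with
  | none, false =>
    intro x hx y hy _
    simp only [ach] at hx hy
    rw [Finset.mem_singleton] at hx hy; rw [hx, hy]
  | none, true =>
    intro x hx y hy hxy
    simp only [ach] at hx hy
    rw [Finset.mem_image] at hx hy
    obtain ⟨u, _, rfl⟩ := hx; obtain ⟨v, _, rfl⟩ := hy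
    have := hxy (Finset.mem_singleton_self u)
    rw [Finset.mem_singleton] at this
    rw [this]
  | some a, false =>
    obtain ⟨ha, hcard⟩ := ho a rfl
    have hne : (s.erase a).Nonempty := by
      rw [← Finset.card_pos, Finset.card_erase_of_mem ha]; omega
    intro x hx y hy hxy
    simp only [ach] at hx hy
    rcases Finset.mem_insert.1 hx with rfl | hx <;>
      rcases Finset.mem_insert.1 hy with rfl | hy
    · rfl
    · rw [Finset.mem_singleton] at hy; subst hy
      have := hxy (Finset.mem_singleton_self a)
      exact absurd this (by simp)
    · rw [Finset.mem_singleton] at hx; subst hx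
      obtain ⟨z, hz⟩ := hne
      have := hxy hz
      rw [Finset.mem_singleton] at this
      exact absurd this (Finset.mem_erase.1 hz).1
    · rw [Finset.mem_singleton] at hx hy; rw [hx, hy]
  | some a, true =>
    intro x hx y hy hxy
    simp only [ach] at hx hy
    rw [Finset.mem_image] at hx hy
    obtain ⟨u, hu, rfl⟩ := hx; obtain ⟨v, hv, rfl⟩ := hy
    have hu' := hxy (Finset.mem_insert_of_mem (Finset.mem_singleton_self u))
    rcases Finset.mem_insert.1 hu' with h | h
    · exact absurd h (Finset.mem_erase.1 hu).1
    · rw [Finset.mem_singleton] at h; rw [h]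

lemma card_erase_two {s : Finset (Fin n)} {a : Fin n} (ha : a ∈ s) (hs : s.card = 3) :
    (s.erase a).card = 2 := by
  rw [Finset.card_erase_of_mem ha, hs]

lemma card_ach (s : Finset (Fin n)) (o : Option (Fin n)) (b : Bool) (hs : s.card = 3)
    (ho : ∀ a, o = some a → a ∈ s) :
    (ach s o b).card = (if o = none then (if b then 3 else 1) else 2) := by
  match o, b with
  | none, false => simp [ach]
  | none, true =>
    simp only [ach, if_pos rfl, if_pos]
    rw [Finset.card_image_of_injective _ (fun x y h => by
      rwa [Finset.singleton_inj] at h), hs]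
  | some a, false =>
    have ha := ho a rfl
    simp only [ach]
    rw [Finset.card_insert_of_notMem, Finset.card_singleton]
    · rfl
    · rw [Finset.mem_singleton]
      intro h
      have := card_erase_two ha hs
      rw [← h] at this
      simp at this
  | some a, true =>
    have ha := ho a rfl
    simp only [ach]
    rw [Finset.card_image_of_injOn, card_erase_two ha hs]
    · rfl
    · intro x hx y hy hxy
      have hxy' : insert a ({x} : Finset (Fin n)) = insert a {y} := hxy
      have : x ∈ insert a ({y} : Finset (Fin n)) := by
        rw [← hxy']; exact Finset.mem_insert_of_mem (Finset.mem_singleton_self x)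
      rcases Finset.mem_insert.1 this with h | h
      · exact absurd h (Finset.mem_erase.1 hx).1
      · rwa [Finset.mem_singleton] at h

lemma card_lowerSets_ach (s : Finset (Fin n)) (o : Option (Fin n)) (b : Bool) (hs : s.card = 3)
    (ho : ∀ a, o = some a → a ∈ s) :
    (lowerSets (famF (ach s o b))).card = (if o = none then (if b then 1 else 3) else 2) := by
  have herase_inj : ∀ (t : Finset (Fin n)), Set.InjOn (fun x => Finset.univ.erase x) (t : Set (Fin n)) := by
    intro t x _ y _ h
    exact univ_erase_inj h
  match o, b with
  | none, false =>
    show (lowerSets (famF {s})).card = 3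
    rw [lowerSets_single, Finset.card_image_of_injOn (herase_inj s), hs]
  | none, true =>
    show (lowerSets (famF (s.image _))).card = 1
    rw [lowerSets_singletons, Finset.card_singleton]
  | some a, false =>
    have ha := ho a rfl
    show (lowerSets (famF (insert {a} {s.erase a}))).card = 2
    rw [lowerSets_type2, Finset.card_image_of_injOn, card_erase_two ha hs]
    intro x hx y hy hxy
    have hxa : x ≠ a := (Finset.mem_erase.1 hx).1
    by_contra hne
    have hxy' : (Finset.univ.erase a).erase x = (Finset.univ.erase a).erase y := hxy
    have : x ∈ (Finset.univ.erase a).erase y := by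
      exact Finset.mem_erase.2 ⟨hne, Finset.mem_erase.2 ⟨hxa, Finset.mem_univ x⟩⟩
    rw [← hxy'] at this
    simp at this
  | some a, true =>
    have ha := ho a rfl
    have hne : (s.erase a).Nonempty := by
      rw [← Finset.card_pos, card_erase_two ha hs]; omega
    show (lowerSets (famF ((s.erase a).image _))).card = 2
    rw [lowerSets_type3 s a hne, Finset.card_insert_of_notMem, Finset.card_singleton]
    rw [Finset.mem_singleton]
    intro h
    have h1 : a ∈ Finset.univ \ s.erase a := by
      rw [Finset.mem_sdiff]
      exact ⟨Finset.mem_univ a, fun hh => (Finset.mem_erase.1 hh).1 rfl⟩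
    rw [← h] at h1
    simp at h1

lemma mUL_ach (s : Finset (Fin n)) (o : Option (Fin n)) (b : Bool) (hs : s.card = 3)
    (ho : ∀ a, o = some a → a ∈ s) : mUL (famF (ach s o b)) = 4 := by
  have hAC : IsAC (ach s o b) := isAC_ach s o b (fun a h => ⟨ho a h, by omega⟩)
  rw [mUL_eq_add, upperSets_famF hAC, card_ach s o b hs ho, card_lowerSets_ach s o b hs ho]
  match o, b with
  | none, false => rfl
  | none, true => rfl
  | some a, false => rfl
  | some a, true => rfl

end Aux5
section Aux6
variable {n : ℕ}

/-- Parameter set: a 3-subset, an optional marked element, and a bit. -/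
def Par (n : ℕ) : Finset (Σ _ : Finset (Fin n), Option (Fin n) × Bool) :=
  (Finset.univ.powersetCard 3).sigma
    (fun s => (insert none (s.image some)) ×ˢ (Finset.univ : Finset Bool))

def Gmap (p : Σ _ : Finset (Fin n), Option (Fin n) × Bool) : Finset (Fin n) → Bool :=
  famF (ach p.1 p.2.1 p.2.2)

lemma mem_Par {p : Σ _ : Finset (Fin n), Option (Fin n) × Bool} :
    p ∈ Par n ↔ p.1.card = 3 ∧ ∀ a, p.2.1 = some a → a ∈ p.1 := by
  obtain ⟨s, o, b⟩ := p
  rw [Par, Finset.mem_sigma, Finset.mem_product, Finset.mem_powersetCard_univ]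
  constructor
  · rintro ⟨hs, ho, -⟩
    refine ⟨hs, fun a ha => ?_⟩
    rcases Finset.mem_insert.1 ho with h | h
    · simp only at ha; rw [ha] at h; exact absurd h (by simp)
    · rw [Finset.mem_image] at h
      obtain ⟨x, hx, hxa⟩ := h
      simp only at ha
      rw [ha] at hxa
      have : x = a := Option.some_injective _ hxa
      rwa [← this]
  · rintro ⟨hs, ho⟩
    refine ⟨hs, ?_, Finset.mem_univ _⟩
    match o with
    | none => exact Finset.mem_insert_self _ _
    | some a => exact Finset.mem_insert_of_mem (Finset.mem_image_of_mem _ (ho a rfl))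

lemma famF_pair_true (A B X : Finset (Fin n)) :
    famF {A, B} X = true ↔ A ⊆ X ∨ B ⊆ X := by
  rw [famF_true]
  constructor
  · rintro ⟨c, hc, hcX⟩
    rcases Finset.mem_insert.1 hc with rfl | hc
    · exact Or.inl hcX
    · rw [Finset.mem_singleton] at hc; subst hc; exact Or.inr hcX
  · rintro (h | h)
    · exact ⟨A, Finset.mem_insert_self _ _, h⟩
    · exact ⟨B, Finset.mem_insert_of_mem (Finset.mem_singleton_self _), h⟩

lemma maxLower_disjoint_pair {A B : Finset (Fin n)} {x y : Fin n}
    (hx : x ∈ A) (hy : y ∈ B) (hd : ∀ z ∈ A, z ∉ B) :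
    IsMaxLower (famF {A, B}) ((Finset.univ.erase x).erase y) := by
  have hxy : x ≠ y := fun h => hd x hx (h ▸ hy)
  constructor
  · cases hc : famF {A, B} ((Finset.univ.erase x).erase y) with
    | false => rfl
    | true =>
      rcases (famF_pair_true A B _).1 hc with h | h
      · have := h hx; simp at this
      · have := h hy; simp [hxy] at this
  · intro T hT
    obtain ⟨z, hzT, hzX⟩ := Finset.exists_of_ssubset hT
    have hz : z = x ∨ z = y := by
      by_contra hz
      push_neg at hz
      exact hzX (Finset.mem_erase.2 ⟨hz.2, Finset.mem_erase.2 ⟨hz.1, Finset.mem_univ z⟩⟩)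
    rw [famF_pair_true]
    rcases hz with rfl | rfl
    · left
      intro w hw
      rcases eq_or_ne w z with rfl | hwz
      · exact hzT
      · have hwy : w ≠ y := fun h => hd w hw (h ▸ hy)
        exact hT.subset (Finset.mem_erase.2 ⟨hwy, Finset.mem_erase.2 ⟨hwz, Finset.mem_univ w⟩⟩)
    · right
      intro w hw
      rcases eq_or_ne w z with rfl | hwz
      · exact hzT
      · have hwx : w ≠ x := fun h => hd x hx (h ▸ hw)
        exact hT.subset (Finset.mem_erase.2 ⟨hwz, Finset.mem_erase.2 ⟨hwx, Finset.mem_univ w⟩⟩)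

lemma classify_12 {f : Finset (Fin n) → Bool} (hff : f = famF (upperSets f))
    {A B : Finset (Fin n)} (hU2 : upperSets f = {A, B}) (hA : A.card = 1)
    (hB : B.card = 2) (hnAB : ¬ A ⊆ B) : ∃ p ∈ Par n, Gmap p = f := by
  obtain ⟨a, rfl⟩ := Finset.card_eq_one.1 hA
  have haB : a ∉ B := fun h => hnAB (Finset.singleton_subset_iff.2 h)
  refine ⟨⟨insert a B, some a, false⟩, ?_, ?_⟩
  · rw [mem_Par]
    constructor
    · rw [Finset.card_insert_of_notMem haB, hB]
    · rintro a' ha'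
      simp only at ha'
      have : a = a' := Option.some_injective _ ha'
      rw [← this]
      exact Finset.mem_insert_self _ _
  · show famF (ach (insert a B) (some a) false) = f
    have : ach (insert a B) (some a) false = insert {a} {(insert a B).erase a} := rfl
    rw [this, Finset.erase_insert haB, hff, hU2]

lemma classify {f : Finset (Fin n) → Bool} (hf : MonoBF f) (hm : mUL f = 4) :
    ∃ p ∈ Par n, Gmap p = f := by
  have hU := upperSets_nonempty hf hm
  have hL := lowerSets_nonempty hf hm
  have hsum : (upperSets f).card + (lowerSets f).card = 4 := by
    rw [← mUL_eq_add]; exact hm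
  have hu1 : 1 ≤ (upperSets f).card := Finset.card_pos.2 hU
  have hl1 : 1 ≤ (lowerSets f).card := Finset.card_pos.2 hL
  have hff : f = famF (upperSets f) := eq_famF hf
  have hcases : (upperSets f).card = 1 ∨ (upperSets f).card = 2 ∨ (upperSets f).card = 3 := by
    omega
  rcases hcases with h1 | h2 | h3
  · -- |U| = 1, |L| = 3
    obtain ⟨A, hA⟩ := Finset.card_eq_one.1 h1
    have hfA : f = famF {A} := by rw [hff, hA]
    have hl3 : (lowerSets f).card = 3 := by omega
    have hlc : (lowerSets f).card = A.card := by
      rw [hfA, lowerSets_single, Finset.card_image_of_injOn]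
      intro x _ y _ h
      exact univ_erase_inj h
    refine ⟨⟨A, none, false⟩, ?_, ?_⟩
    · rw [mem_Par]
      refine ⟨?_, by simp⟩
      show A.card = 3
      omega
    · show famF (ach A none false) = f
      rw [hfA]; rfl
  · -- |U| = 2, |L| = 2
    have hl2 : (lowerSets f).card = 2 := by omega
    obtain ⟨A, B, hAB, hU2⟩ := Finset.card_eq_two.1 h2
    have hAmem : A ∈ upperSets f := by rw [hU2]; exact Finset.mem_insert_self _ _
    have hBmem : B ∈ upperSets f := by
      rw [hU2]; exact Finset.mem_insert_of_mem (Finset.mem_singleton_self _)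
    have hAC := antichain_upperSets f
    have hnAB : ¬ A ⊆ B := fun h => hAB (hAC A hAmem B hBmem h)
    have hnBA : ¬ B ⊆ A := fun h => hAB ((hAC B hBmem A hAmem h).symm)
    have hAne : A.Nonempty := by
      rw [Finset.nonempty_iff_ne_empty]
      rintro rfl
      exact hnAB (Finset.empty_subset B)
    have hBne : B.Nonempty := by
      rw [Finset.nonempty_iff_ne_empty]
      rintro rfl
      exact hnBA (Finset.empty_subset A)
    have hA2 : A.card ≤ 2 := by have := card_le_lower hf hAmem; omega
    have hB2 : B.card ≤ 2 := by have := card_le_lower hf hBmem; omega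
    have hA1 : 1 ≤ A.card := Finset.card_pos.2 hAne
    have hB1 : 1 ≤ B.card := Finset.card_pos.2 hBne
    have hAc : A.card = 1 ∨ A.card = 2 := by omega
    have hBc : B.card = 1 ∨ B.card = 2 := by omega
    rcases hAc with hAc | hAc <;> rcases hBc with hBc | hBc
    · -- both singletons: contradiction
      exfalso
      obtain ⟨a, rfl⟩ := Finset.card_eq_one.1 hAc
      obtain ⟨b, rfl⟩ := Finset.card_eq_one.1 hBc
      have himg : upperSets f = (({a, b} : Finset (Fin n))).image (fun x => {x}) := by
        rw [hU2, Finset.image_insert, Finset.image_singleton]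
      have : (lowerSets f).card = 1 := by
        rw [hff, himg, lowerSets_singletons, Finset.card_singleton]
      omega
    · exact classify_12 hff hU2 hAc hBc hnAB
    · exact classify_12 hff (by rw [hU2, Finset.pair_comm]) hBc hAc hnBA
    · -- both pairs
      by_cases hcommon : ∃ x ∈ A, x ∈ B
      · obtain ⟨a, haA, haB⟩ := hcommon
        obtain ⟨b, hb⟩ : ∃ b, A.erase a = {b} := by
          apply Finset.card_eq_one.1
          rw [Finset.card_erase_of_mem haA, hAc]
        obtain ⟨c, hc⟩ : ∃ c, B.erase a = {c} := by
          apply Finset.card_eq_one.1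
          rw [Finset.card_erase_of_mem haB, hBc]
        have hbA : A = insert a {b} := by rw [← hb, Finset.insert_erase haA]
        have hcB : B = insert a {c} := by rw [← hc, Finset.insert_erase haB]
        have hba : b ≠ a := by
          have : b ∈ A.erase a := by rw [hb]; exact Finset.mem_singleton_self b
          exact (Finset.mem_erase.1 this).1
        have hca : c ≠ a := by
          have : c ∈ B.erase a := by rw [hc]; exact Finset.mem_singleton_self c
          exact (Finset.mem_erase.1 this).1
        have hbc : b ≠ c := by
          rintro rfl
          exact hAB (by rw [hbA, hcB])
        have hanotin : a ∉ (insert b {c} : Finset (Fin n)) := by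
          simp [Ne.symm hba, Ne.symm hca]
        refine ⟨⟨(insert a (insert b {c}) : Finset (Fin n)), some a, true⟩, ?_, ?_⟩
        · rw [mem_Par]
          constructor
          · rw [Finset.card_insert_of_notMem hanotin,
              Finset.card_insert_of_notMem (by simp [hbc]), Finset.card_singleton]
          · rintro a' ha'
            simp only at ha'
            have : a = a' := Option.some_injective _ ha'
            rw [← this]
            exact Finset.mem_insert_self _ _
        · show famF (ach ((insert a (insert b {c}) : Finset (Fin n))) (some a) true) = f
          have h1 : ach ((insert a (insert b {c}) : Finset (Fin n))) (some a) true =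
              (((insert a (insert b {c}) : Finset (Fin n))).erase a).image (fun x => insert a ({x} : Finset (Fin n))) := rfl
          rw [h1, Finset.erase_insert hanotin, Finset.image_insert, Finset.image_singleton,
            hff, hU2, hbA, hcB]
      · -- disjoint pairs: contradiction
        exfalso
        push_neg at hcommon
        obtain ⟨a, b, hab, rfl⟩ := Finset.card_eq_two.1 hAc
        obtain ⟨c, d, hcd, rfl⟩ := Finset.card_eq_two.1 hBc
        have haA : a ∈ ({a, b} : Finset (Fin n)) := Finset.mem_insert_self _ _
        have hbA : b ∈ ({a, b} : Finset (Fin n)) :=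
          Finset.mem_insert_of_mem (Finset.mem_singleton_self _)
        have hcB : c ∈ ({c, d} : Finset (Fin n)) := Finset.mem_insert_self _ _
        have hdB : d ∈ ({c, d} : Finset (Fin n)) :=
          Finset.mem_insert_of_mem (Finset.mem_singleton_self _)
        have hlow : lowerSets f = lowerSets (famF {({a,b} : Finset (Fin n)), {c,d}}) := by
          rw [hff, hU2]
        have hM1 : (Finset.univ.erase a).erase c ∈ lowerSets f := by
          rw [hlow, mem_lowerSets]
          exact maxLower_disjoint_pair haA hcB hcommon
        have hM2 : (Finset.univ.erase a).erase d ∈ lowerSets f := by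
          rw [hlow, mem_lowerSets]
          exact maxLower_disjoint_pair haA hdB hcommon
        have hM3 : (Finset.univ.erase b).erase c ∈ lowerSets f := by
          rw [hlow, mem_lowerSets]
          exact maxLower_disjoint_pair hbA hcB hcommon
        have hda : d ≠ a := fun h => hcommon a haA (h ▸ hdB)
        have hba2 : b ≠ a := Ne.symm hab
        have hbc : b ≠ c := fun h => hcommon b hbA (h ▸ hcB)
        have hbd : b ≠ d := fun h => hcommon b hbA (h ▸ hdB)
        have h12 : (Finset.univ.erase a).erase c ≠ (Finset.univ.erase a).erase d := by
          intro h
          have : d ∈ (Finset.univ.erase a).erase c :=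
            Finset.mem_erase.2 ⟨Ne.symm hcd, Finset.mem_erase.2 ⟨hda, Finset.mem_univ d⟩⟩
          rw [h] at this
          simp at this
        have h13 : (Finset.univ.erase a).erase c ≠ (Finset.univ.erase b).erase c := by
          intro h
          have : b ∈ (Finset.univ.erase a).erase c :=
            Finset.mem_erase.2 ⟨hbc, Finset.mem_erase.2 ⟨hba2, Finset.mem_univ b⟩⟩
          rw [h] at this
          simp at this
        have h23 : (Finset.univ.erase a).erase d ≠ (Finset.univ.erase b).erase c := by
          intro h
          have : b ∈ (Finset.univ.erase a).erase d :=
            Finset.mem_erase.2 ⟨hbd, Finset.mem_erase.2 ⟨hba2, Finset.mem_univ b⟩⟩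
          rw [h] at this
          simp at this
        have hsub : ({(Finset.univ.erase a).erase c, (Finset.univ.erase a).erase d,
            (Finset.univ.erase b).erase c} : Finset (Finset (Fin n))) ⊆ lowerSets f := by
          intro X hX
          rcases Finset.mem_insert.1 hX with rfl | hX
          · exact hM1
          rcases Finset.mem_insert.1 hX with rfl | hX
          · exact hM2
          rw [Finset.mem_singleton] at hX
          subst hX
          exact hM3
        have hcard3 : ({(Finset.univ.erase a).erase c, (Finset.univ.erase a).erase d,
            (Finset.univ.erase b).erase c} : Finset (Finset (Fin n))).card = 3 := by
          rw [Finset.card_insert_of_notMem (by simp [h12, h13]),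
            Finset.card_insert_of_notMem (by simp [h23]), Finset.card_singleton]
        have := Finset.card_le_card hsub
        omega
  · -- |U| = 3, |L| = 1
    have hl1' : (lowerSets f).card = 1 := by omega
    obtain ⟨M, hM⟩ := Finset.card_eq_one.1 hl1'
    have hMm : M ∈ lowerSets f := by rw [hM]; exact Finset.mem_singleton_self M
    have hMf : f M = false := (mem_lowerSets.1 hMm).1
    have hsubM : ∀ X, f X = false → X ⊆ M := by
      intro X hX
      obtain ⟨M', hM', hXM'⟩ := exists_maxLower X hX
      rw [hM, Finset.mem_singleton] at hM'
      rwa [hM'] at hXM'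
    have hUeq : upperSets f = (Finset.univ \ M).image (fun x => ({x} : Finset (Fin n))) := by
      ext A
      rw [Finset.mem_image]
      constructor
      · intro hA
        obtain ⟨hAt, hAmin⟩ := mem_upperSets.1 hA
        have hnAM : ¬ A ⊆ M := by
          intro h
          have := hf h
          rw [hAt, hMf] at this
          exact absurd this (by simp)
        obtain ⟨x, hxA, hxM⟩ := Finset.not_subset.1 hnAM
        have hfx : f {x} = true := by
          cases hfx : f {x} with
          | true => rfl
          | false =>
            exact absurd (Finset.singleton_subset_iff.1 (hsubM _ hfx)) hxM
        refine ⟨x, Finset.mem_sdiff.2 ⟨Finset.mem_univ x, hxM⟩, ?_⟩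
        by_contra hne
        have hss : {x} ⊂ A :=
          ssubset_of_subset_of_ne (Finset.singleton_subset_iff.2 hxA) hne
        have := hAmin _ hss
        rw [hfx] at this
        exact absurd this (by simp)
      · rintro ⟨x, hx, rfl⟩
        rw [Finset.mem_sdiff] at hx
        refine mem_upperSets.2 ⟨?_, ?_⟩
        · cases hfx : f {x} with
          | true => rfl
          | false => exact absurd (Finset.singleton_subset_iff.1 (hsubM _ hfx)) hx.2
        · intro T hT
          have hTe : T = ∅ := by
            rcases Finset.subset_singleton_iff.1 hT.subset with h | h
            · exact h
            · exact absurd h hT.ne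
          subst hTe
          cases hfe : f ∅ with
          | false => rfl
          | true =>
            have := hf (Finset.empty_subset M)
            rw [hfe, hMf] at this
            exact absurd this (by simp)
    have hs3 : (Finset.univ \ M).card = 3 := by
      rw [hUeq] at h3
      rw [Finset.card_image_of_injective _
        (fun x y (h : ({x} : Finset (Fin n)) = {y}) => by rwa [Finset.singleton_inj] at h)] at h3
      exact h3
    refine ⟨⟨Finset.univ \ M, none, true⟩, ?_, ?_⟩
    · rw [mem_Par]
      exact ⟨hs3, by simp⟩
    · show famF (ach (Finset.univ \ M) none true) = f
      rw [hff, hUeq]; rfl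

end Aux6
section Aux7
variable {n : ℕ}

lemma ins_eq {a z u : Fin n} (hz : z ≠ a)
    (h : insert a ({z} : Finset (Fin n)) = insert a {u}) : z = u := by
  have : z ∈ insert a ({u} : Finset (Fin n)) := by
    rw [← h]; exact Finset.mem_insert_of_mem (Finset.mem_singleton_self z)
  rcases Finset.mem_insert.1 this with h' | h'
  · exact absurd h' hz
  · rwa [Finset.mem_singleton] at h'

lemma ach_inj {s s' : Finset (Fin n)} {o o' : Option (Fin n)} {b b' : Bool}
    (hs : s.card = 3) (hs' : s'.card = 3)
    (ho : ∀ a, o = some a → a ∈ s) (ho' : ∀ a, o' = some a → a ∈ s')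
    (h : ach s o b = ach s' o' b') : s = s' ∧ o = o' ∧ b = b' := by
  have hcard : (if o = none then (if b then 3 else 1) else 2) =
      (if o' = none then (if b' then 3 else 1) else 2) := by
    rw [← card_ach s o b hs ho, ← card_ach s' o' b' hs' ho', h]
  match o, o' with
  | none, none =>
    have hb : b = b' := by
      cases b <;> cases b' <;> simp_all
    subst hb
    cases b with
    | false =>
      have h' : ({s} : Finset (Finset (Fin n))) = {s'} := h
      rw [Finset.singleton_inj] at h'
      exact ⟨h', rfl, rfl⟩
    | true =>
      have h' : s.image (fun x => ({x} : Finset (Fin n))) =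
          s'.image (fun x => ({x} : Finset (Fin n))) := h
      refine ⟨?_, rfl, rfl⟩
      have hinj : Function.Injective (fun x : Fin n => ({x} : Finset (Fin n))) := by
        intro x y hxy
        simpa using hxy
      exact Finset.image_injective hinj h'
  | none, some a' => cases b <;> simp_all
  | some a, none => cases b' <;> simp_all
  | some a, some a' =>
    have ha := ho a rfl
    have ha' := ho' a' rfl
    match b, b' with
    | false, true =>
      exfalso
      have h1 : ({a} : Finset (Fin n)) ∈ ach s' (some a') true := by
        rw [← h]
        exact Finset.mem_insert_self _ _
      simp only [ach, Finset.mem_image] at h1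
      obtain ⟨x, hx, hxa⟩ := h1
      have hxa' : x ≠ a' := (Finset.mem_erase.1 hx).1
      have : (insert a' ({x} : Finset (Fin n))).card = 1 := by
        rw [hxa]; exact Finset.card_singleton a
      rw [Finset.card_insert_of_notMem (by simp [Ne.symm hxa'])] at this
      simp at this
    | true, false =>
      exfalso
      have h1 : ({a'} : Finset (Fin n)) ∈ ach s (some a) true := by
        rw [h]
        exact Finset.mem_insert_self _ _
      simp only [ach, Finset.mem_image] at h1
      obtain ⟨x, hx, hxa⟩ := h1
      have hxa' : x ≠ a := (Finset.mem_erase.1 hx).1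
      have : (insert a ({x} : Finset (Fin n))).card = 1 := by
        rw [hxa]; exact Finset.card_singleton a'
      rw [Finset.card_insert_of_notMem (by simp [Ne.symm hxa'])] at this
      simp at this
    | false, false =>
      have h' : insert {a} {s.erase a} = insert {a'} {s'.erase a'} := h
      have haa' : a = a' := by
        have h1 : ({a} : Finset (Fin n)) ∈ (insert {a'} {s'.erase a'} : Finset (Finset (Fin n))) := by
          rw [← h']; exact Finset.mem_insert_self _ _
        rcases Finset.mem_insert.1 h1 with h2 | h2
        · rwa [Finset.singleton_inj] at h2
        · rw [Finset.mem_singleton] at h2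
          exfalso
          have := card_erase_two ha' hs'
          rw [← h2] at this
          simp at this
      subst haa'
      have h2 : s.erase a ∈ (insert {a} {s'.erase a} : Finset (Finset (Fin n))) := by
        rw [← h']; exact Finset.mem_insert_of_mem (Finset.mem_singleton_self _)
      rcases Finset.mem_insert.1 h2 with h3 | h3
      · exfalso
        have := card_erase_two ha hs
        rw [h3] at this
        simp at this
      · rw [Finset.mem_singleton] at h3
        refine ⟨?_, rfl, rfl⟩
        rw [← Finset.insert_erase ha, ← Finset.insert_erase ha', h3]
    | true, true =>
      have h' : (s.erase a).image (fun x => insert a ({x} : Finset (Fin n))) =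
          (s'.erase a').image (fun x => insert a' ({x} : Finset (Fin n))) := h
      have haa' : a = a' := by
        by_contra hne
        obtain ⟨x, y, hxy, hexy⟩ := Finset.card_eq_two.1 (card_erase_two ha hs)
        have hmem : ∀ z ∈ s.erase a, ∃ u ∈ s'.erase a',
            insert a ({z} : Finset (Fin n)) = insert a' {u} := by
          intro z hz
          have : insert a ({z} : Finset (Fin n)) ∈
              (s'.erase a').image (fun x => insert a' ({x} : Finset (Fin n))) := by
            rw [← h']; exact Finset.mem_image_of_mem _ hz
          rw [Finset.mem_image] at this
          obtain ⟨u, hu, huz⟩ := this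
          exact ⟨u, hu, huz.symm⟩
        have key : ∀ z ∈ s.erase a, z = a' := by
          intro z hz
          obtain ⟨u, hu, huz⟩ := hmem z hz
          have hau : a = u := by
            have : a ∈ insert a' ({u} : Finset (Fin n)) := by
              rw [← huz]; exact Finset.mem_insert_self _ _
            rcases Finset.mem_insert.1 this with h4 | h4
            · exact absurd h4 hne
            · rwa [Finset.mem_singleton] at h4
          have : a' ∈ insert a ({z} : Finset (Fin n)) := by
            rw [huz]; exact Finset.mem_insert_self _ _
          rcases Finset.mem_insert.1 this with h4 | h4
          · exact absurd h4.symm hne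
          · rw [Finset.mem_singleton] at h4; exact h4.symm
        have hx' : x = a' := key x (by rw [hexy]; exact Finset.mem_insert_self _ _)
        have hy' : y = a' := key y
          (by rw [hexy]; exact Finset.mem_insert_of_mem (Finset.mem_singleton_self _))
        exact hxy (hx'.trans hy'.symm)
      subst haa'
      have hsub : ∀ (t t' : Finset (Fin n)), t.image (fun x => insert a ({x} : Finset (Fin n))) =
          t'.image (fun x => insert a ({x} : Finset (Fin n))) →
          (∀ z ∈ t, z ≠ a) → (∀ z ∈ t', z ≠ a) → t ⊆ t' := by
        intro t t' ht hta hta' z hz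
        have : insert a ({z} : Finset (Fin n)) ∈
            t'.image (fun x => insert a ({x} : Finset (Fin n))) := by
          rw [← ht]; exact Finset.mem_image_of_mem _ hz
        rw [Finset.mem_image] at this
        obtain ⟨u, hu, huz⟩ := this
        have := ins_eq (hta z hz) huz.symm
        rwa [this]
      have hse : s.erase a = s'.erase a := by
        apply Finset.Subset.antisymm
        · exact hsub _ _ h' (fun z hz => (Finset.mem_erase.1 hz).1)
            (fun z hz => (Finset.mem_erase.1 hz).1)
        · exact hsub _ _ h'.symm (fun z hz => (Finset.mem_erase.1 hz).1)
            (fun z hz => (Finset.mem_erase.1 hz).1)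
      refine ⟨?_, rfl, rfl⟩
      rw [← Finset.insert_erase ha, ← Finset.insert_erase ha', hse]

lemma Gmap_injOn : Set.InjOn (Gmap (n := n)) (Par n : Set ((_ : Finset (Fin n)) × Option (Fin n) × Bool)) := by
  rintro ⟨s, o, b⟩ hp ⟨s', o', b'⟩ hq h
  rw [Finset.mem_coe, mem_Par] at hp hq
  have hAC : IsAC (ach s o b) := isAC_ach s o b (fun a ha => ⟨hp.2 a ha, by
    have := hp.1; simp only at this; omega⟩)
  have hAC' : IsAC (ach s' o' b') := isAC_ach s' o' b' (fun a ha => ⟨hq.2 a ha, by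
    have := hq.1; simp only at this; omega⟩)
  have hach : ach s o b = ach s' o' b' := famF_inj hAC hAC' h
  obtain ⟨h1, h2, h3⟩ := ach_inj hp.1 hq.1 hp.2 hq.2 hach
  subst h1; subst h2; subst h3
  rfl

lemma card_Par : (Par n).card = 8 * n.choose 3 := by
  rw [Par, Finset.card_sigma]
  have hstep : ∀ s : Finset (Fin n), s ∈ Finset.univ.powersetCard 3 →
      ((insert (none : Option (Fin n)) (s.image some)) ×ˢ
        (Finset.univ : Finset Bool)).card = 8 := by
    intro s hs
    rw [Finset.mem_powersetCard_univ] at hs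
    rw [Finset.card_product, Finset.card_insert_of_notMem (by simp),
      Finset.card_image_of_injective _ (Option.some_injective _), hs]
    simp
  rw [Finset.sum_congr rfl hstep, Finset.sum_const, smul_eq_mul,
    Finset.card_powersetCard, Finset.card_univ, Fintype.card_fin, mul_comm]

end Aux7
/-- `b_4(n) = 8 · C(n, 3)`. -/
theorem stmt8 (n : ℕ) : bCount n 4 = 8 * n.choose 3 := by
  rw [bCount]
  have hset : Finset.univ.filter (fun f : Finset (Fin n) → Bool => MonoBF f ∧ mUL f = 4) =
      (Par n).image Gmap := by
    ext f
    simp only [Finset.mem_filter, Finset.mem_univ, true_and, Finset.mem_image]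
    constructor
    · rintro ⟨hf, hm⟩
      obtain ⟨p, hp, hG⟩ := classify hf hm
      exact ⟨p, hp, hG⟩
    · rintro ⟨p, hp, rfl⟩
      rw [mem_Par] at hp
      exact ⟨mono_famF _, mUL_ach p.1 p.2.1 p.2.2 hp.1 hp.2⟩
  rw [hset, Finset.card_image_of_injOn Gmap_injOn, card_Par]
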